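/- Let Γ₁, Γ₂ be parabolic subgroups of a Coxeter group W. Then Γ₁ ∩ Γ₂ is a parabolic subgroup of W. -/

import Mathlib

/-!
Tits' argument: letting `s i` act on `W × ZMod 2` by conjugating the first coordinate and
flipping the sign exactly at `s i` defines an action of `W`, so the parity `invParity w t` of
the number of occurrences of `t` in the right inversion sequence of a word for `w` depends only
on `w`. For a reflection `t` this parity is `1` exactly when `ℓ (w * t) < ℓ w`, and it is a
cocycle, so every inversion of `x * y` is an inversion of `y` or a `y`-conjugate of an inversion
of `x`. Hence inversions of elements of `W_T` lie in `W_T`.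

To intersect `W_T` with `w W_T' w⁻¹`, replace `w` by a shortest element `d` of `W_T w`. Then
`ℓ (d⁻¹ * a) = ℓ d + ℓ a` for `a ∈ W_T`, and the inversion cocycle shows that every right
descent `s i` of an element of `W_T ∩ d W_T' d⁻¹` lies in the intersection again. By induction
on length the intersection is generated by the simple reflections it contains, and conjugating
back gives the theorem.
-/

/-- A parabolic subgroup of a Coxeter system `(W, S)` is a conjugate of a subgroup generated by
a subset of the simple reflections. -/
def IsParabolicSubgroup {B W : Type*} [Group W] {M : CoxeterMatrix B}
    (cs : CoxeterSystem M W) (H : Subgroup W) : Prop :=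
  ∃ (w : W) (T : Set B),
    H = Subgroup.map (MulAut.conj w).toMonoidHom (Subgroup.closure (cs.simple '' T))

open Pointwise

theorem Subgroup.mem_conj_smul_iff {G : Type*} [Group G] {H : Subgroup G} {g x : G} :
    x ∈ MulAut.conj g • H ↔ g⁻¹ * x * g ∈ H := by
  rw [Subgroup.mem_pointwise_smul_iff_inv_smul_mem, ← map_inv, MulAut.smul_def, MulAut.conj_apply,
    inv_inv]

namespace CoxeterSystem

variable {B W : Type*} [Group W] {M : CoxeterMatrix B} (cs : CoxeterSystem M W)

local prefix:100 "s" => cs.simple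
local prefix:100 "π" => cs.wordProd
local prefix:100 "ℓ" => cs.length
local prefix:100 "ris" => cs.rightInvSeq

theorem simple_mul_mul_simple_eq_iff (i : B) (t u : W) : s i * t * s i = u ↔ t = s i * u * s i := by
  constructor <;> rintro rfl <;> simp [mul_assoc]

section ParityRepresentation

variable [DecidableEq W]

def reflectionPerm (i : B) : Equiv.Perm (W × ZMod 2) :=
  Function.Involutive.toPerm (fun x ↦ (s i * x.1 * s i, x.2 + if x.1 = s i then 1 else 0)) <| by
    rintro ⟨t, ε⟩
    ext
    · simp [mul_assoc, simple_mul_simple_cancel_left]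
    · simp only [simple_mul_mul_simple_eq_iff, simple_mul_simple_cancel_right, add_assoc]
      split_ifs <;> decide +revert

theorem reflectionPerm_apply (i : B) (t : W) (ε : ZMod 2) :
    cs.reflectionPerm i (t, ε) = (s i * t * s i, ε + if t = s i then 1 else 0) :=
  rfl

theorem reflectionPerm_mul_pow_apply (i i' : B) (k : ℕ) (t : W) (ε : ZMod 2) :
    ((cs.reflectionPerm i * cs.reflectionPerm i') ^ k) (t, ε) =
      ((s i * s i') ^ k * t * ((s i * s i') ^ k)⁻¹,
        ε + ∑ r ∈ Finset.range (2 * k), if t = s i * (s i * s i') ^ (r + 1) then 1 else 0) := by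
  set p := s i * s i'
  have hi' : s i' = s i * p := (cs.simple_mul_simple_cancel_left i).symm
  have hp_inv : p⁻¹ = s i' * s i := by rw [mul_inv_rev, inv_simple, inv_simple]
  have hstep (t : W) : s i * (s i' * t * s i') * s i = p * t * p⁻¹ := by
    simp only [hp_inv, p]; group
  -- conjugation by `p` shifts the dihedral reflections `s i * p ^ n` by two steps
  have hconj (t : W) (n : ℕ) :
      s i * (s i' * t * s i') * s i = s i * p ^ n ↔ t = s i * p ^ (n + 2) := by
    rw [hstep, mul_inv_eq_iff_eq_mul, ← eq_inv_mul_iff_mul_eq, hp_inv, hi']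
    simp only [mul_assoc, simple_mul_simple_cancel_left]
    group
  induction k generalizing t ε with
  | zero => simp
  | succ k ih =>
    rw [pow_succ, Equiv.Perm.mul_apply, Equiv.Perm.mul_apply, reflectionPerm_apply,
      reflectionPerm_apply, ih]
    ext
    · rw [hstep, pow_succ]; group
    · simp only [hconj, Finset.sum_range_succ' _ (2 * k + 1), Finset.sum_range_succ' _ (2 * k),
        show 2 * (k + 1) = 2 * k + 1 + 1 by ring]
      have h1 : t = s i' ↔ t = s i * p ^ 1 := by rw [pow_one, hi']
      have h2 : s i' * t * s i' = s i ↔ t = s i * p ^ 2 := by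
        rw [simple_mul_mul_simple_eq_iff, hi']
        simp only [mul_assoc, simple_mul_simple_cancel_left, sq]
      simp only [h1, h2, zero_add, Nat.reduceAdd]
      ring_nf

theorem isLiftable_reflectionPerm : M.IsLiftable cs.reflectionPerm := by
  intro i i'
  refine Equiv.ext fun ⟨t, ε⟩ ↦ ?_
  rw [reflectionPerm_mul_pow_apply, simple_mul_simple_pow, one_mul, inv_one, mul_one,
    Equiv.Perm.one_apply, two_mul, Finset.sum_range_add]
  -- the sequence `s i * (s i * s i') ^ r` has period `M i i'`, so each term is counted twice
  simp only [add_assoc, pow_add, simple_mul_simple_pow, one_mul]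
  rw [CharTwo.add_self_eq_zero, add_zero]

def parityRep : W →* Equiv.Perm (W × ZMod 2) :=
  cs.lift ⟨cs.reflectionPerm, cs.isLiftable_reflectionPerm⟩

theorem parityRep_simple (i : B) : cs.parityRep (s i) = cs.reflectionPerm i :=
  cs.lift_apply_simple _ i

theorem parityRep_wordProd_apply (ω : List B) (t : W) (ε : ZMod 2) :
    cs.parityRep (π ω) (t, ε) = (π ω * t * (π ω)⁻¹, ε + (ris ω).count t) := by
  induction ω generalizing ε with
  | nil => simp
  | cons i ω ih =>
    rw [wordProd_cons, map_mul, Equiv.Perm.mul_apply, ih, parityRep_simple, reflectionPerm_apply,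
      rightInvSeq, List.count_cons]
    ext
    · simp only [mul_inv_rev, inv_simple, mul_assoc]
    · have hconj : π ω * t * (π ω)⁻¹ = s i ↔ (π ω)⁻¹ * s i * π ω = t := by
        constructor <;> intro h <;> rw [← h] <;> group
      push_cast [beq_iff_eq, hconj, add_assoc]
      rfl

def invParity (w t : W) : ZMod 2 := (cs.parityRep w (t, 0)).2

theorem parityRep_apply (w t : W) (ε : ZMod 2) :
    cs.parityRep w (t, ε) = (w * t * w⁻¹, ε + cs.invParity w t) := by
  obtain ⟨ω, rfl⟩ := cs.wordProd_surjective w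
  simp [invParity, parityRep_wordProd_apply]

theorem invParity_wordProd (ω : List B) (t : W) : cs.invParity (π ω) t = (ris ω).count t := by
  simp [invParity, parityRep_wordProd_apply]

theorem invParity_mul (u v t : W) :
    cs.invParity (u * v) t = cs.invParity u (v * t * v⁻¹) + cs.invParity v t := by
  rw [invParity, map_mul, Equiv.Perm.mul_apply, parityRep_apply, parityRep_apply, zero_add,
    add_comm]

@[simp]
theorem invParity_one (t : W) : cs.invParity 1 t = 0 := by
  simp [invParity]

theorem invParity_simple_self (i : B) : cs.invParity (s i) (s i) = 1 := by
  rw [← wordProd_singleton, invParity_wordProd]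
  simp

variable {cs} in
theorem IsReflection.invParity_self {t : W} (ht : cs.IsReflection t) : cs.invParity t t = 1 := by
  obtain ⟨w, i, rfl⟩ := ht
  have h₁ : cs.invParity (w * s i * w⁻¹) (w * s i * w⁻¹) =
      cs.invParity (w * s i) (s i) + cs.invParity w⁻¹ (w * s i * w⁻¹) := by
    rw [invParity_mul]
    group
  have h₂ : cs.invParity (w * s i) (s i) = cs.invParity w (s i) + 1 := by
    rw [invParity_mul, invParity_simple_self, mul_inv_cancel_right]
  have h₃ : cs.invParity w⁻¹ (w * s i * w⁻¹) + cs.invParity w (s i) = 0 := by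
    rw [← invParity_mul, inv_mul_cancel, invParity_one]
  rw [h₁, h₂]
  linear_combination h₃

theorem mem_rightInvSeq_of_invParity_wordProd_eq_one {ω : List B} {t : W}
    (h : cs.invParity (π ω) t = 1) : t ∈ ris ω := by
  rw [invParity_wordProd] at h
  refine List.count_pos_iff.mp (Nat.pos_of_ne_zero fun h₀ ↦ ?_)
  simp [h₀] at h

theorem isRightInversion_of_invParity_eq_one {w t : W} (h : cs.invParity w t = 1) :
    cs.IsRightInversion w t := by
  obtain ⟨ω, hω, rfl⟩ := cs.exists_isReduced w
  exact cs.isRightInversion_of_mem_rightInvSeq hω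
    (cs.mem_rightInvSeq_of_invParity_wordProd_eq_one h)

theorem isRightInversion_iff_invParity_eq_one {w t : W} (ht : cs.IsReflection t) :
    cs.IsRightInversion w t ↔ cs.invParity w t = 1 := by
  refine ⟨fun h ↦ ?_, cs.isRightInversion_of_invParity_eq_one⟩
  have hw : cs.invParity w t = cs.invParity (w * t) t + 1 := by
    conv_lhs => rw [← mul_inv_cancel_right w t, ht.inv]
    rw [invParity_mul, ht.invParity_self, mul_inv_cancel_right]
  by_contra hne
  have : cs.invParity (w * t) t = 1 := by
    revert hw hne
    generalize cs.invParity w t = a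
    generalize cs.invParity (w * t) t = b
    decide +revert
  have := (cs.isRightInversion_of_invParity_eq_one this).2
  rw [mul_assoc, ht.mul_self, mul_one] at this
  exact absurd h.2 (by omega)

end ParityRepresentation

variable {cs} in
theorem IsRightInversion.or_of_mul {x y t : W} (h : cs.IsRightInversion (x * y) t) :
    cs.IsRightInversion y t ∨ cs.IsRightInversion x (y * t * y⁻¹) := by
  classical
  have ht := h.1
  rw [cs.isRightInversion_iff_invParity_eq_one ht, invParity_mul] at h
  rw [cs.isRightInversion_iff_invParity_eq_one ht,
    cs.isRightInversion_iff_invParity_eq_one (ht.conj y)]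
  revert h
  generalize cs.invParity x (y * t * y⁻¹) = a
  generalize cs.invParity y t = b
  decide +revert

theorem mem_closure_simple_image_iff {T : Set B} {w : W} :
    w ∈ Subgroup.closure (cs.simple '' T) ↔ ∃ ω : List B, (∀ i ∈ ω, i ∈ T) ∧ π ω = w := by
  constructor
  · intro hw
    induction hw using Subgroup.closure_induction with
    | mem _ hx =>
      obtain ⟨i, hi, rfl⟩ := hx
      exact ⟨[i], by simpa using hi, wordProd_singleton cs i⟩
    | one => exact ⟨[], by simp, wordProd_nil cs⟩
    | mul _ _ _ _ hx hy =>
      obtain ⟨ω, hω, rfl⟩ := hx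
      obtain ⟨ω', hω', rfl⟩ := hy
      exact ⟨ω ++ ω', by simpa [or_imp, forall_and] using ⟨hω, hω'⟩, wordProd_append cs ω ω'⟩
    | inv _ _ hx =>
      obtain ⟨ω, hω, rfl⟩ := hx
      exact ⟨ω.reverse, by simpa using hω, wordProd_reverse cs ω⟩
  · rintro ⟨ω, hω, rfl⟩
    induction ω with
    | nil => exact Subgroup.one_mem _
    | cons i ω ih =>
      rw [wordProd_cons]
      exact Subgroup.mul_mem _ (Subgroup.subset_closure ⟨i, hω i List.mem_cons_self, rfl⟩)
        (ih fun j hj ↦ hω j (List.mem_cons_of_mem i hj))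

variable {cs} in
theorem IsRightInversion.mem_closure {T : Set B} {w t : W}
    (hw : w ∈ Subgroup.closure (cs.simple '' T)) (h : cs.IsRightInversion w t) :
    t ∈ Subgroup.closure (cs.simple '' T) := by
  classical
  obtain ⟨ω, hω, rfl⟩ := cs.mem_closure_simple_image_iff.mp hw
  rw [cs.isRightInversion_iff_invParity_eq_one h.1] at h
  obtain ⟨j, hj, rfl⟩ := List.mem_iff_getElem.mp (cs.mem_rightInvSeq_of_invParity_wordProd_eq_one h)
  have hdel := cs.wordProd_mul_getD_rightInvSeq ω j
  rw [List.getD_eq_getElem _ _ hj] at hdel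
  rw [← inv_mul_cancel_left (π ω) (ris ω)[j], hdel]
  refine Subgroup.mul_mem _ (Subgroup.inv_mem _ hw) (cs.mem_closure_simple_image_iff.mpr
    ⟨ω.eraseIdx j, fun i hi ↦ hω i ((List.eraseIdx_sublist ω j).subset hi), rfl⟩)

variable {cs} in
theorem IsRightDescent.simple_mem_closure {T : Set B} {w : W} {i : B}
    (hw : w ∈ Subgroup.closure (cs.simple '' T)) (hi : cs.IsRightDescent w i) :
    s i ∈ Subgroup.closure (cs.simple '' T) :=
  IsRightInversion.mem_closure hw ((cs.isRightInversion_simple_iff_isRightDescent w i).mpr hi)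

theorem length_mul_eq_add_of_forall_length_le {T : Set B} {d b : W}
    (hmin : ∀ b ∈ Subgroup.closure (cs.simple '' T), ℓ d ≤ ℓ (d * b))
    (hb : b ∈ Subgroup.closure (cs.simple '' T)) : ℓ (d * b) = ℓ d + ℓ b := by
  induction hn : ℓ b generalizing b with
  | zero => rw [cs.length_eq_zero_iff.mp hn, mul_one, add_zero]
  | succ n ih =>
    obtain ⟨i, hi⟩ := cs.exists_rightDescent_of_ne_one (w := b) (by rintro rfl; simp at hn)
    have hsi := hi.simple_mem_closure hb
    have hb' : b * s i ∈ Subgroup.closure (cs.simple '' T) := Subgroup.mul_mem _ hb hsi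
    have hb'_len : ℓ (b * s i) = n := by
      have := cs.length_mul_simple b i
      unfold IsRightDescent at hi
      omega
    have hb'_add := ih hb' hb'_len
    have hb_eq : b = b * s i * s i := (cs.simple_mul_simple_cancel_right i).symm
    rcases cs.length_mul_simple (d * (b * s i)) i with hup | hdown
    · rw [mul_assoc, ← hb_eq] at hup
      omega
    · have hinv : cs.IsRightInversion (d * (b * s i)) (s i) := ⟨cs.isReflection_simple i, by omega⟩
      rcases hinv.or_of_mul with h | h
      · have := h.2
        rw [← hb_eq] at this
        omega
      · have hconj : b * s i * s i * (b * s i)⁻¹ ∈ Subgroup.closure (cs.simple '' T) :=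
          Subgroup.mul_mem _ (Subgroup.mul_mem _ hb' hsi) (Subgroup.inv_mem _ hb')
        exact absurd h.2 (not_lt.mpr (hmin _ hconj))

theorem conj_simple_mem_closure_of_isRightDescent {T T' : Set B} {d x : W} {i : B}
    (hmin : ∀ a ∈ Subgroup.closure (cs.simple '' T), ℓ d ≤ ℓ (a * d))
    (hx : x ∈ Subgroup.closure (cs.simple '' T))
    (hxd : d⁻¹ * x * d ∈ Subgroup.closure (cs.simple '' T')) (hi : cs.IsRightDescent x i) :
    d⁻¹ * s i * d ∈ Subgroup.closure (cs.simple '' T') := by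
  have hmin' : ∀ a ∈ Subgroup.closure (cs.simple '' T), ℓ d⁻¹ ≤ ℓ (d⁻¹ * a) := fun a ha ↦ by
    rw [length_inv, ← length_inv _ (d⁻¹ * a), mul_inv_rev, inv_inv]
    exact hmin _ (Subgroup.inv_mem _ ha)
  have hsi := hi.simple_mem_closure hx
  have hx_add := cs.length_mul_eq_add_of_forall_length_le hmin' hx
  have hxs_add := cs.length_mul_eq_add_of_forall_length_le hmin' (Subgroup.mul_mem _ hx hsi)
  have hs_add := cs.length_mul_eq_add_of_forall_length_le hmin' hsi
  have hinv : cs.IsRightInversion (d⁻¹ * x * d * d⁻¹) (s i) := by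
    refine ⟨cs.isReflection_simple i, ?_⟩
    rw [mul_inv_cancel_right, mul_assoc, hxs_add, hx_add]
    exact Nat.add_lt_add_left hi _
  rcases hinv.or_of_mul with h | h
  · exact absurd h.2 (by rw [hs_add, length_simple]; omega)
  · simpa using h.mem_closure hxd

theorem eq_closure_simple_of_forall_exists_isRightDescent {P : Subgroup W}
    (h : ∀ x ∈ P, x ≠ 1 → ∃ i, cs.IsRightDescent x i ∧ s i ∈ P) :
    P = Subgroup.closure (cs.simple '' {i | s i ∈ P}) := by
  refine le_antisymm (fun x hx ↦ ?_) ((Subgroup.closure_le P).mpr ?_)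
  · induction hn : ℓ x using Nat.strong_induction_on generalizing x with
    | _ n ih =>
      rcases eq_or_ne x 1 with rfl | hx1
      · exact Subgroup.one_mem _
      obtain ⟨i, hi, hiP⟩ := h x hx hx1
      rw [← simple_mul_simple_cancel_right cs (w := x) (i := i)]
      exact Subgroup.mul_mem _ (ih _ (hn ▸ hi) _ (Subgroup.mul_mem _ hx hiP) rfl)
        (Subgroup.subset_closure ⟨i, hiP, rfl⟩)
  · rintro _ ⟨i, hi, rfl⟩
    exact hi

variable {cs} in
theorem _root_.isParabolicSubgroup_iff {H : Subgroup W} :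
    IsParabolicSubgroup cs H ↔
      ∃ (w : W) (T : Set B), H = MulAut.conj w • Subgroup.closure (cs.simple '' T) :=
  Iff.rfl

theorem _root_.isParabolicSubgroup_closure (T : Set B) :
    IsParabolicSubgroup cs (Subgroup.closure (cs.simple '' T)) :=
  isParabolicSubgroup_iff.mpr ⟨1, T, by rw [map_one, one_smul]⟩

variable {cs} in
theorem _root_.IsParabolicSubgroup.conj_smul {H : Subgroup W} (hH : IsParabolicSubgroup cs H)
    (g : W) : IsParabolicSubgroup cs (MulAut.conj g • H) := by
  obtain ⟨w, T, rfl⟩ := isParabolicSubgroup_iff.mp hH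
  exact isParabolicSubgroup_iff.mpr ⟨g * w, T, by rw [map_mul, mul_smul]⟩

theorem isParabolicSubgroup_closure_inf_conj_smul (T T' : Set B) (w : W) :
    IsParabolicSubgroup cs
      (Subgroup.closure (cs.simple '' T) ⊓ MulAut.conj w • Subgroup.closure (cs.simple '' T')) := by
  set C := Subgroup.closure (cs.simple '' T)
  set C' := Subgroup.closure (cs.simple '' T')
  set a := Function.argminOn (fun a ↦ ℓ (a * w)) (C : Set W) ⟨1, C.one_mem⟩
  have ha : a ∈ C := Function.argminOn_mem _ _ _
  have hmin : ∀ a' ∈ C, ℓ (a * w) ≤ ℓ (a' * (a * w)) := fun a' ha' ↦ by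
    simpa only [mul_assoc] using Function.argminOn_le (fun a ↦ ℓ (a * w)) _ (C.mul_mem ha' ha)
  have hP : C ⊓ MulAut.conj (a * w) • C' =
      Subgroup.closure (cs.simple '' {i | s i ∈ C ⊓ MulAut.conj (a * w) • C'}) := by
    refine cs.eq_closure_simple_of_forall_exists_isRightDescent fun x hxP hx1 ↦ ?_
    obtain ⟨hx, hxd⟩ := Subgroup.mem_inf.mp hxP
    obtain ⟨i, hi⟩ := cs.exists_rightDescent_of_ne_one hx1
    rw [Subgroup.mem_conj_smul_iff] at hxd
    exact ⟨i, hi, hi.simple_mem_closure hx,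
      Subgroup.mem_conj_smul_iff.mpr (cs.conj_simple_mem_closure_of_isRightDescent hmin hx hxd hi)⟩
  have hC : C ⊓ MulAut.conj w • C' = MulAut.conj a⁻¹ • (C ⊓ MulAut.conj (a * w) • C') := by
    rw [Subgroup.smul_inf, smul_smul, ← map_mul, inv_mul_cancel_left,
      Subgroup.conj_smul_eq_self_of_mem (C.inv_mem ha)]
  rw [hC, hP]
  exact (isParabolicSubgroup_closure cs _).conj_smul a⁻¹

end CoxeterSystem

/-- The intersection of two parabolic subgroups of a Coxeter group is parabolic. -/
theorem isParabolicSubgroup_inf {B W : Type*} [Group W] {M : CoxeterMatrix B}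
    (cs : CoxeterSystem M W) (Γ₁ Γ₂ : Subgroup W)
    (h₁ : IsParabolicSubgroup cs Γ₁) (h₂ : IsParabolicSubgroup cs Γ₂) :
    IsParabolicSubgroup cs (Γ₁ ⊓ Γ₂) := by
  obtain ⟨w₁, T₁, rfl⟩ := h₁
  obtain ⟨w₂, T₂, rfl⟩ := h₂
  have h := (cs.isParabolicSubgroup_closure_inf_conj_smul T₁ T₂ (w₁⁻¹ * w₂)).conj_smul w₁
  rwa [Subgroup.smul_inf, smul_smul, ← map_mul, mul_inv_cancel_left] at h
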